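/- arXiv:2601.17650 — 3 statements merged into one kernel-verified Lean document; each statement's English description precedes it below -/
import Mathlib

section
/- Let E be a real inner product space, let ϖ ≥ 1 be a real number, and let a, b ∈ E. Then ⟪‖a‖^{ϖ−1}·a − ‖b‖^{ϖ−1}·b, a − b⟫ ≥ (1/2)·‖a‖^{ϖ−1}·‖a − b‖² + (1/2)·‖b‖^{ϖ−1}·‖a − b‖². -/
/-!
With `α = ‖a‖^(ϖ-1)` and `β = ‖b‖^(ϖ-1)`, polarization gives
`⟪α a - β b, a - b⟫ = (α + β)/2 ‖a - b‖² + (α - β)/2 (‖a‖² - ‖b‖²)`.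
The last term is nonnegative because `t ↦ t^(ϖ-1)` and `t ↦ t²` are both monotone on `[0, ∞)`,
so `α - β` and `‖a‖² - ‖b‖²` have the same sign.
-/

open scoped RealInnerProductSpace

theorem real_inner_smul_sub_smul_sub {E : Type*} [NormedAddCommGroup E] [InnerProductSpace ℝ E]
    (α β : ℝ) (a b : E) :
    ⟪α • a - β • b, a - b⟫ =
      (α + β) / 2 * ‖a - b‖ ^ 2 + (α - β) / 2 * (‖a‖ ^ 2 - ‖b‖ ^ 2) := by
  rw [norm_sub_sq_real]
  simp only [inner_sub_left, inner_sub_right, real_inner_smul_left,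
    real_inner_self_eq_norm_sq, real_inner_comm b a]
  ring

/-- Pointwise strong monotonicity of the damping nonlinearity `a ↦ ‖a‖^(ϖ-1) • a`
(estimate (2.23) of the paper). -/
theorem damping_strong_monotone {E : Type*} [NormedAddCommGroup E] [InnerProductSpace ℝ E]
    (ϖ : ℝ) (hϖ : 1 ≤ ϖ) (a b : E) :
    ⟪(‖a‖ ^ (ϖ - 1)) • a - (‖b‖ ^ (ϖ - 1)) • b, a - b⟫ ≥
      (1 / 2) * ‖a‖ ^ (ϖ - 1) * ‖a - b‖ ^ 2 + (1 / 2) * ‖b‖ ^ (ϖ - 1) * ‖a - b‖ ^ 2 := by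
  have hmonovary : MonovaryOn (fun t : ℝ ↦ t ^ (ϖ - 1)) (fun t : ℝ ↦ t ^ 2) (Set.Ici 0) :=
    (Real.monotoneOn_rpow_Ici_of_exponent_nonneg (by linarith)).monovaryOn pow_left_monotoneOn
  have hsign : 0 ≤ (‖a‖ ^ (ϖ - 1) - ‖b‖ ^ (ϖ - 1)) * (‖a‖ ^ 2 - ‖b‖ ^ 2) :=
    hmonovary.sub_mul_sub_nonneg (norm_nonneg b) (norm_nonneg a)
  rw [real_inner_smul_sub_smul_sub]
  linarith
end

section
/- Let E be a real inner product space, let ϖ ≥ 1 be a real number, and let a, b ∈ E. Then ‖‖a‖^{ϖ−1}·a − ‖b‖^{ϖ−1}·b‖ ≤ ϖ·(‖a‖ + ‖b‖)^{ϖ−1}·‖a − b‖. -/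
/-!
Write `‖a‖^q • a - ‖b‖^q • b = ‖a‖^q • (a - b) + (‖a‖^q - ‖b‖^q) • b` with `‖b‖ ≤ ‖a‖`.
The first term is at most `‖a‖^q ‖a - b‖`. For the second, the mean value theorem gives
`x^q - y^q = q c^(q-1) (x - y)` for some `c ∈ (y, x)`, and `c^(q-1) y ≤ c^q ≤ x^q`;
with `‖a‖ - ‖b‖ ≤ ‖a - b‖` this bounds it by `q ‖a‖^q ‖a - b‖`.
-/

open Real

lemma rpow_sub_rpow_mul_le {q x y : ℝ} (hq : 0 ≤ q) (hy : 0 ≤ y) (hyx : y ≤ x) :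
    (x ^ q - y ^ q) * y ≤ q * x ^ q * (x - y) := by
  rcases hy.eq_or_lt with rfl | hy_pos
  · simp only [mul_zero, sub_zero]
    positivity
  rcases hyx.eq_or_lt with rfl | hyx
  · simp
  obtain ⟨c, ⟨hyc, hcx⟩, hslope⟩ := exists_hasDerivAt_eq_slope (fun t => t ^ q)
    (fun t => q * t ^ (q - 1)) hyx
    (fun t ht => (continuousAt_rpow_const t q
      (Or.inl (hy_pos.trans_le ht.1).ne')).continuousWithinAt)
    (fun t ht => hasDerivAt_rpow_const (Or.inl (hy_pos.trans ht.1).ne'))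
  have hc : 0 < c := hy_pos.trans hyc
  have hdiff : x ^ q - y ^ q = q * c ^ (q - 1) * (x - y) := by
    rw [hslope, div_mul_cancel₀ _ (sub_pos.mpr hyx).ne']
  have hcy : c ^ (q - 1) * y ≤ x ^ q :=
    calc c ^ (q - 1) * y ≤ c ^ (q - 1) * c := by gcongr
      _ = c ^ q := by rw [← rpow_add_one hc.ne', sub_add_cancel]
      _ ≤ x ^ q := by gcongr
  calc (x ^ q - y ^ q) * y = q * (c ^ (q - 1) * y) * (x - y) := by rw [hdiff]; ring
    _ ≤ q * x ^ q * (x - y) := by gcongr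

lemma norm_rpow_smul_sub_rpow_smul_le {E : Type*} [SeminormedAddCommGroup E]
    [NormedSpace ℝ E] {q : ℝ} (hq : 0 ≤ q) {a b : E} (hba : ‖b‖ ≤ ‖a‖) :
    ‖‖a‖ ^ q • a - ‖b‖ ^ q • b‖ ≤ (1 + q) * ‖a‖ ^ q * ‖a - b‖ := by
  have hsplit : ‖a‖ ^ q • a - ‖b‖ ^ q • b = ‖a‖ ^ q • (a - b) + (‖a‖ ^ q - ‖b‖ ^ q) • b := by
    module
  have hpow : 0 ≤ ‖a‖ ^ q - ‖b‖ ^ q := sub_nonneg.mpr (by gcongr)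
  calc ‖‖a‖ ^ q • a - ‖b‖ ^ q • b‖
      ≤ ‖a‖ ^ q * ‖a - b‖ + (‖a‖ ^ q - ‖b‖ ^ q) * ‖b‖ := by
        rw [hsplit]
        refine (norm_add_le _ _).trans_eq ?_
        rw [norm_smul, norm_smul, norm_of_nonneg (by positivity), norm_of_nonneg hpow]
    _ ≤ ‖a‖ ^ q * ‖a - b‖ + q * ‖a‖ ^ q * (‖a‖ - ‖b‖) := by
        gcongr _ + ?_
        exact rpow_sub_rpow_mul_le hq (norm_nonneg b) hba
    _ ≤ ‖a‖ ^ q * ‖a - b‖ + q * ‖a‖ ^ q * ‖a - b‖ := by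
        gcongr
        exact norm_sub_norm_le a b
    _ = (1 + q) * ‖a‖ ^ q * ‖a - b‖ := by ring

/-- Pointwise mean-value-theorem estimate for the damping nonlinearity
`a ↦ ‖a‖^(ϖ-1) • a`, underlying the local Lipschitz property of `K`. -/
theorem damping_locally_lipschitz {E : Type*} [NormedAddCommGroup E] [InnerProductSpace ℝ E]
    (ϖ : ℝ) (hϖ : 1 ≤ ϖ) (a b : E) :
    ‖(‖a‖ ^ (ϖ - 1)) • a - (‖b‖ ^ (ϖ - 1)) • b‖ ≤
      ϖ * (‖a‖ + ‖b‖) ^ (ϖ - 1) * ‖a - b‖ := by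
  have hq : 0 ≤ ϖ - 1 := sub_nonneg.mpr hϖ
  wlog hba : ‖b‖ ≤ ‖a‖ generalizing a b
  · rw [norm_sub_rev, norm_sub_rev a, add_comm]
    exact this b a (le_of_not_ge hba)
  calc ‖‖a‖ ^ (ϖ - 1) • a - ‖b‖ ^ (ϖ - 1) • b‖
      ≤ (1 + (ϖ - 1)) * ‖a‖ ^ (ϖ - 1) * ‖a - b‖ := norm_rpow_smul_sub_rpow_smul_le hq hba
    _ ≤ ϖ * (‖a‖ + ‖b‖) ^ (ϖ - 1) * ‖a - b‖ := by
        rw [add_sub_cancel]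
        gcongr
        exact le_add_of_nonneg_right (norm_nonneg b)
end

section
/- Let d ≥ 1, let Q ⊆ ℝ^d be a measurable set, let μ > 0, β > 0 and ϖ > 3 be real numbers, and set ϖ̂ = ((ϖ−3)/(2μ(ϖ−1))) · (4/(μβ(ϖ−1)))^{2/(ϖ−3)}. Let ζ, 𝔷 : ℝ^d → ℝ^d be measurable and let η : ℝ^d → ℝ^d be differentiable. Assume the function x ↦ ⟪Dη(x)(ζ(x)), 𝔷(x)⟫ is integrable on Q, and that x ↦ ‖Dη(x)‖², x ↦ ‖𝔷(x)‖^{ϖ−1}‖ζ(x)‖² and x ↦ ‖ζ(x)‖² are integrable on Q. Then |∫_Q ⟪Dη(x)(ζ(x)), 𝔷(x)⟫ dx| ≤ (μ/2) ∫_Q ‖Dη(x)‖² dx + (β/4) ∫_Q ‖𝔷(x)‖^{ϖ−1}‖ζ(x)‖² dx + ϖ̂ ∫_Q ‖ζ(x)‖² dx. -/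
/-!
Pointwise, Cauchy–Schwarz and Young's inequality with weight `μ` give
`|⟪Dη ζ, 𝔷⟫| ≤ (μ/2)‖Dη‖² + ‖ζ‖² ‖𝔷‖²/(2μ)`. Since `ϖ > 3`, the exponent `(ϖ-1)/2` exceeds `1`,
so a second, weighted Young inequality with the conjugate exponents `(ϖ-1)/2` and
`(ϖ-1)/(ϖ-3)` absorbs `‖𝔷‖²/(2μ)` into `(β/4)‖𝔷‖^(ϖ-1)` up to an additive constant; that
constant is exactly `ϖ̂`. Integrating the pointwise bound over `Q` gives the estimate.
-/

open MeasureTheory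
open scoped RealInnerProductSpace

theorem le_mul_rpow_div_add_inv_rpow_div {p q : ℝ} (hpq : p.HolderConjugate q) {c x : ℝ}
    (hc : 0 < c) (hx : 0 ≤ x) : x ≤ c * x ^ p / p + c⁻¹ ^ (q - 1) / q := by
  have hl : 0 < c ^ p⁻¹ := Real.rpow_pos_of_pos hc _
  have young := Real.young_inequality_of_nonneg (mul_nonneg hl.le hx) (inv_nonneg.2 hl.le) hpq
  have h_prod : c ^ p⁻¹ * x * (c ^ p⁻¹)⁻¹ = x := by field_simp
  have h_left : (c ^ p⁻¹ * x) ^ p = c * x ^ p := by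
    rw [Real.mul_rpow hl.le hx, ← Real.rpow_mul hc.le, inv_mul_cancel₀ hpq.ne_zero,
      Real.rpow_one]
  have h_right : (c ^ p⁻¹)⁻¹ ^ q = c⁻¹ ^ (q - 1) := by
    rw [← Real.inv_rpow hc.le, ← Real.rpow_mul (inv_nonneg.2 hc.le), inv_mul_eq_div,
      hpq.symm.div_conj_eq_sub_one]
  rwa [h_prod, h_left, h_right] at young

theorem sq_div_le_mul_rpow_add_const {μ β ϖ : ℝ} (hμ : 0 < μ) (hβ : 0 < β) (hϖ : 3 < ϖ)
    {t : ℝ} (ht : 0 ≤ t) :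
    t ^ 2 / (2 * μ) ≤ β / 4 * t ^ (ϖ - 1) +
      (ϖ - 3) / (2 * μ * (ϖ - 1)) * (4 / (μ * β * (ϖ - 1))) ^ ((2 : ℝ) / (ϖ - 3)) := by
  have hϖ1 : 0 < ϖ - 1 := by linarith
  have hϖ3 : 0 < ϖ - 3 := by linarith
  have hpq : ((ϖ - 1) / 2).HolderConjugate ((ϖ - 1) / (ϖ - 3)) := by
    refine Real.holderConjugate_iff.2 ⟨by linarith, ?_⟩
    field_simp
    ring
  have hc : 0 < μ * β * (ϖ - 1) / 4 := by positivity
  have young := le_mul_rpow_div_add_inv_rpow_div hpq hc (sq_nonneg t)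
  have h_pow : (t ^ 2) ^ ((ϖ - 1) / 2) = t ^ (ϖ - 1) := by
    rw [← Real.rpow_natCast, ← Real.rpow_mul ht]
    ring_nf
  have h_exp : (ϖ - 1) / (ϖ - 3) - 1 = 2 / (ϖ - 3) := by
    field_simp
    ring
  rw [h_pow, h_exp, inv_div] at young
  refine (div_le_div_of_nonneg_right young (by positivity)).trans_eq ?_
  field_simp

theorem abs_inner_apply_le_supercritical {E F : Type*}
    [NormedAddCommGroup E] [NormedSpace ℝ E] [NormedAddCommGroup F] [InnerProductSpace ℝ F]
    {μ β ϖ : ℝ} (hμ : 0 < μ) (hβ : 0 < β) (hϖ : 3 < ϖ) (A : E →L[ℝ] F) (v : E) (w : F) :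
    |⟪A v, w⟫| ≤ μ / 2 * ‖A‖ ^ 2 + β / 4 * (‖w‖ ^ (ϖ - 1) * ‖v‖ ^ 2) +
      (ϖ - 3) / (2 * μ * (ϖ - 1)) * (4 / (μ * β * (ϖ - 1))) ^ ((2 : ℝ) / (ϖ - 3)) * ‖v‖ ^ 2 := by
  set K := (ϖ - 3) / (2 * μ * (ϖ - 1)) * (4 / (μ * β * (ϖ - 1))) ^ ((2 : ℝ) / (ϖ - 3))
  have cauchy_schwarz : |⟪A v, w⟫| ≤ ‖A‖ * ‖v‖ * ‖w‖ :=
    (abs_real_inner_le_norm _ _).trans <|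
      mul_le_mul_of_nonneg_right (A.le_opNorm v) (norm_nonneg w)
  have young : ‖A‖ * ‖v‖ * ‖w‖ ≤ μ / 2 * ‖A‖ ^ 2 + ‖v‖ ^ 2 * (‖w‖ ^ 2 / (2 * μ)) := by
    have : 0 ≤ (μ * ‖A‖ - ‖v‖ * ‖w‖) ^ 2 / (2 * μ) := by positivity
    have expand : (μ * ‖A‖ - ‖v‖ * ‖w‖) ^ 2 / (2 * μ) =
        μ / 2 * ‖A‖ ^ 2 + ‖v‖ ^ 2 * (‖w‖ ^ 2 / (2 * μ)) - ‖A‖ * ‖v‖ * ‖w‖ := by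
      field_simp
      ring
    linarith
  calc |⟪A v, w⟫| ≤ μ / 2 * ‖A‖ ^ 2 + ‖v‖ ^ 2 * (‖w‖ ^ 2 / (2 * μ)) := cauchy_schwarz.trans young
    _ ≤ μ / 2 * ‖A‖ ^ 2 + ‖v‖ ^ 2 * (β / 4 * ‖w‖ ^ (ϖ - 1) + K) := by
        grw [sq_div_le_mul_rpow_add_const hμ hβ hϖ (norm_nonneg w)]
    _ = _ := by ring

theorem trilinear_form_estimate_supercritical_general (d : ℕ)
    (Q : Set (EuclideanSpace ℝ (Fin d)))
    (μ β ϖ : ℝ) (hμ : 0 < μ) (hβ : 0 < β) (hϖ : 3 < ϖ)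
    (ζ 𝔷 η : EuclideanSpace ℝ (Fin d) → EuclideanSpace ℝ (Fin d))
    (hint : IntegrableOn (fun x => ⟪fderiv ℝ η x (ζ x), 𝔷 x⟫) Q)
    (hint1 : IntegrableOn (fun x => ‖fderiv ℝ η x‖ ^ 2) Q)
    (hint2 : IntegrableOn (fun x => ‖𝔷 x‖ ^ (ϖ - 1) * ‖ζ x‖ ^ 2) Q)
    (hint3 : IntegrableOn (fun x => ‖ζ x‖ ^ 2) Q) :
    |∫ x in Q, ⟪fderiv ℝ η x (ζ x), 𝔷 x⟫| ≤
      (μ / 2) * (∫ x in Q, ‖fderiv ℝ η x‖ ^ 2) +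
        (β / 4) * (∫ x in Q, ‖𝔷 x‖ ^ (ϖ - 1) * ‖ζ x‖ ^ 2) +
          (((ϖ - 3) / (2 * μ * (ϖ - 1))) * (4 / (μ * β * (ϖ - 1))) ^ ((2 : ℝ) / (ϖ - 3))) *
            ∫ x in Q, ‖ζ x‖ ^ 2 := by
  set K := (ϖ - 3) / (2 * μ * (ϖ - 1)) * (4 / (μ * β * (ϖ - 1))) ^ ((2 : ℝ) / (ϖ - 3))
  have hD := hint1.const_mul (μ / 2)
  have hZ := hint2.const_mul (β / 4)
  have hζ := hint3.const_mul K
  have hDZ : IntegrableOn (fun x => μ / 2 * ‖fderiv ℝ η x‖ ^ 2 +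
      β / 4 * (‖𝔷 x‖ ^ (ϖ - 1) * ‖ζ x‖ ^ 2)) Q := hD.add hZ
  calc |∫ x in Q, ⟪fderiv ℝ η x (ζ x), 𝔷 x⟫|
      ≤ ∫ x in Q, |⟪fderiv ℝ η x (ζ x), 𝔷 x⟫| := abs_integral_le_integral_abs
    _ ≤ ∫ x in Q, (μ / 2 * ‖fderiv ℝ η x‖ ^ 2 +
          β / 4 * (‖𝔷 x‖ ^ (ϖ - 1) * ‖ζ x‖ ^ 2) + K * ‖ζ x‖ ^ 2) :=
        setIntegral_mono hint.abs (hDZ.add hζ) fun x =>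
          abs_inner_apply_le_supercritical hμ hβ hϖ (fderiv ℝ η x) (ζ x) (𝔷 x)
    _ = _ := by
        rw [integral_add hDZ hζ, integral_add hD hZ, integral_const_mul,
          integral_const_mul, integral_const_mul]

/-- The trilinear-form estimate (2.3) of the paper:
`|b(ζ,η,𝔷)| ≤ (μ/2)‖η‖_V² + (β/4)‖|𝔷|^{(ϖ−1)/2}ζ‖₂² + ϖ̂‖ζ‖₂²`,
with the explicit constant `ϖ̂` of equation (2.4). -/
theorem trilinear_form_estimate_supercritical (d : ℕ) (hd : 1 ≤ d)
    (Q : Set (EuclideanSpace ℝ (Fin d))) (hQ : MeasurableSet Q)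
    (μ β ϖ : ℝ) (hμ : 0 < μ) (hβ : 0 < β) (hϖ : 3 < ϖ)
    (ζ 𝔷 η : EuclideanSpace ℝ (Fin d) → EuclideanSpace ℝ (Fin d))
    (hζm : Measurable ζ) (h𝔷m : Measurable 𝔷) (hη : Differentiable ℝ η)
    (hint : IntegrableOn (fun x => ⟪fderiv ℝ η x (ζ x), 𝔷 x⟫) Q)
    (hint1 : IntegrableOn (fun x => ‖fderiv ℝ η x‖ ^ 2) Q)
    (hint2 : IntegrableOn (fun x => ‖𝔷 x‖ ^ (ϖ - 1) * ‖ζ x‖ ^ 2) Q)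
    (hint3 : IntegrableOn (fun x => ‖ζ x‖ ^ 2) Q) :
    |∫ x in Q, ⟪fderiv ℝ η x (ζ x), 𝔷 x⟫| ≤
      (μ / 2) * (∫ x in Q, ‖fderiv ℝ η x‖ ^ 2) +
        (β / 4) * (∫ x in Q, ‖𝔷 x‖ ^ (ϖ - 1) * ‖ζ x‖ ^ 2) +
          (((ϖ - 3) / (2 * μ * (ϖ - 1))) * (4 / (μ * β * (ϖ - 1))) ^ ((2 : ℝ) / (ϖ - 3))) *
            ∫ x in Q, ‖ζ x‖ ^ 2 :=
  trilinear_form_estimate_supercritical_general d Q μ β ϖ hμ hβ hϖ ζ 𝔷 η hint hint1 hint2 hint3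
end
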